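/- Let A be a finite skew left brace with nilpotent additive group and p a prime dividing |A|. The following are equivalent: (1) there exists n with L_n(A, A_p) = 0, where L_0(A, A_p) = A_p and L_{k+1}(A, A_p) = A*L_k(A, A_p); (2) A_{p'} * A_p = 0; (3) the multiplicative group (A,∘) is p-nilpotent (has a normal Hall p'-subgroup). -/

import Mathlib

/-- A skew left brace: `(A,+)` and `(A,*)` are groups (the multiplicative
operation `*` plays the role of the circle operation `∘`) satisfying
`a ∘ (b + c) = a ∘ b - a + a ∘ c`. -/
class SkewBrace (A : Type*) extends AddGroup A, Group A where
  compat : ∀ a b c : A, a * (b + c) = a * b - a + a * c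

/-- The lambda map of a skew brace: `λ_a(b) = -a + a ∘ b`. -/
def lam {A : Type*} [SkewBrace A] (a b : A) : A := -a + a * b

/-- The star operation of a skew brace: `a * b := λ_a(b) - b`. -/
def starB {A : Type*} [SkewBrace A] (a b : A) : A := lam a b - b

/-- `X * Y`: the additive subgroup generated by `{x * y : x ∈ X, y ∈ Y}`. -/
def starSet {A : Type*} [SkewBrace A] (X Y : Set A) : AddSubgroup A :=
  AddSubgroup.closure {z : A | ∃ x ∈ X, ∃ y ∈ Y, z = starB x y}

/-- The series `L_0(A, S) = S`, `L_{k+1}(A, S) = A * L_k(A, S)`. -/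
def Lseq {A : Type*} [SkewBrace A] (S : AddSubgroup A) : ℕ → AddSubgroup A
  | 0 => S
  | k + 1 => starSet (Set.univ : Set A) ↑(Lseq S k)

/-!
Write `P = A_p`, `Q = A_{p'}` and `p ^ e` for the `p`-part of `|A|`. Both are `λ`-invariant,
hence subgroups of `(A, ∘)` of orders `p ^ e` and `|A| / p ^ e`, and every `x ∈ A` factors as
`x = u ∘ w` with `u ∈ P`, `w ∈ Q`.
Condition (2) says that `Q` acts trivially on `P` through `λ`.

(1 → 2) If `λ_x` fixes `x * b`, then `λ_{x ^ j}(b) = b + j • (x * b)`; for `x ∈ Q` the order of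
`x` is prime to `p` while `x * b ∈ P`, which forces `x * b = 0`. Descend from `L_n = 0` to
`L_0 = P`.

(2 → 1) The action of `A` on `P` then factors through the `p`-group `(P, ∘)`, so `P ⋊ (P, ∘)` is
a `p`-group, hence nilpotent, and `L_k(A, P)` lies in its `k`-th lower central term.

(2 ↔ 3) A normal subgroup of index `p ^ e` contains every `p'`-subgroup, so (3) says that `Q` is
normal in `(A, ∘)`. Under (2), `u ∘ y ∘ u⁻¹ = λ_u(y)` for `u ∈ P`, `y ∈ Q`, which gives
normality; conversely, if `x' = b⁻¹ ∘ x ∘ b ∈ Q`, comparing `P`-components in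
`b ∘ x' = x ∘ b` gives `λ_x(b) = b`.
-/

theorem Subgroup.le_of_normal_of_coprime_index {G : Type*} [Group G] {H K : Subgroup G}
    [H.Normal] (hcop : (Nat.card K).Coprime H.index) : K ≤ H :=
  Subgroup.relIndex_eq_one.mp <|
    Nat.eq_one_of_dvd_coprimes hcop (H.relIndex_dvd_card K) (H.relIndex_dvd_index_of_normal K)

namespace SemidirectProduct

open scoped commutatorElement

variable {N G : Type*} [Group N] [Group G] {φ : G →* MulAut N}

theorem _root_.IsPGroup.semidirectProduct {p : ℕ} (hN : IsPGroup p N) (hG : IsPGroup p G) :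
    IsPGroup p (N ⋊[φ] G) := by
  have hker : IsPGroup p (rightHom : N ⋊[φ] G →* G).ker :=
    range_inl_eq_ker_rightHom (φ := φ) ▸ hN.of_equiv (MonoidHom.ofInjective inl_injective)
  have htop := (hG.of_equiv (Subgroup.topEquiv (G := G)).symm).comap_of_ker_isPGroup _ hker
  rw [Subgroup.comap_top] at htop
  exact htop.of_equiv Subgroup.topEquiv

theorem inl_aut_mul_inv_mem_lowerCentralSeries {k : ℕ} {n : N}
    (hn : (inl n : N ⋊[φ] G) ∈ (⊤ : Subgroup (N ⋊[φ] G)).lowerCentralSeries k) (g : G) :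
    (inl (φ g n * n⁻¹) : N ⋊[φ] G) ∈ (⊤ : Subgroup (N ⋊[φ] G)).lowerCentralSeries (k + 1) := by
  have hcomm : (inl (φ g n * n⁻¹) : N ⋊[φ] G) = ⁅(inr g : N ⋊[φ] G), inl n⁆ := by
    simp only [commutatorElement_def, map_mul, inl_aut, map_inv, mul_assoc]
  rw [hcomm, Subgroup.lowerCentralSeries_succ, Subgroup.commutator_comm]
  exact Subgroup.commutator_mem_commutator (Subgroup.mem_top _) hn

end SemidirectProduct

/-- In the theorem, `P = A_p` and `Q = A_{p'}`. -/
structure IsSylowHallPair {G : Type*} [AddGroup G] (p : ℕ) (P Q : AddSubgroup G) : Prop where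
  prime : p.Prime
  mem_left : ∀ a, a ∈ P ↔ ∃ k : ℕ, p ^ k • a = 0
  mem_right : ∀ a, a ∈ Q ↔ ¬ p ∣ addOrderOf a

namespace IsSylowHallPair

variable {G : Type*} [AddGroup G] {p : ℕ} {P Q : AddSubgroup G}

theorem map_mem_left (h : IsSylowHallPair p P Q) (e : G ≃+ G) {a : G} (ha : a ∈ P) : e a ∈ P := by
  obtain ⟨k, hk⟩ := (h.mem_left a).mp ha
  exact (h.mem_left _).mpr ⟨k, by rw [← map_nsmul, hk, map_zero]⟩

theorem map_mem_right (h : IsSylowHallPair p P Q) (e : G ≃+ G) {a : G} (ha : a ∈ Q) :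
    e a ∈ Q := by
  rw [h.mem_right] at ha ⊢
  rwa [← AddEquiv.coe_toAddMonoidHom, addOrderOf_injective _ e.injective]

theorem eq_zero_of_mem_of_mem (h : IsSylowHallPair p P Q) {a : G} (hP : a ∈ P) (hQ : a ∈ Q) :
    a = 0 := by
  obtain ⟨k, hk⟩ := (h.mem_left a).mp hP
  have hcop : (addOrderOf a).Coprime (p ^ k) :=
    h.prime.coprime_pow_of_not_dvd ((h.mem_right a).mp hQ)
  exact AddMonoid.addOrderOf_eq_one_iff.mp
    (Nat.eq_one_of_dvd_coprimes hcop dvd_rfl (addOrderOf_dvd_of_nsmul_eq_zero hk))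

theorem eq_zero_of_nsmul_eq_zero (h : IsSylowHallPair p P Q) {a : G} (ha : a ∈ P) {m : ℕ}
    (hm : ¬ p ∣ m) (hma : m • a = 0) : a = 0 :=
  h.eq_zero_of_mem_of_mem ha <| (h.mem_right a).mpr fun hp =>
    hm (hp.trans (addOrderOf_dvd_of_nsmul_eq_zero hma))

theorem add_comm (h : IsSylowHallPair p P Q) {u v : G} (hu : u ∈ P) (hv : v ∈ Q) :
    u + v = v + u := by
  have : P.Characteristic := AddSubgroup.characteristic_iff_map_le.mpr fun e =>
    AddSubgroup.map_le_iff_le_comap.mpr fun a ha => h.map_mem_left e ha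
  have : Q.Characteristic := AddSubgroup.characteristic_iff_map_le.mpr fun e =>
    AddSubgroup.map_le_iff_le_comap.mpr fun a ha => h.map_mem_right e ha
  refine AddSubgroup.addCommute_of_normal_of_disjoint P Q inferInstance inferInstance ?_ u v hu hv
  exact AddSubgroup.disjoint_def.mpr fun hP hQ => h.eq_zero_of_mem_of_mem hP hQ

theorem add_inj (h : IsSylowHallPair p P Q) {u v u' v' : G} (hu : u ∈ P) (hv : v ∈ Q)
    (hu' : u' ∈ P) (hv' : v' ∈ Q) (huv : u + v = u' + v') : u = u' ∧ v = v' := by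
  have hmid : -u' + u = v' + -v := by
    rw [neg_add_eq_iff_eq_add, ← add_assoc, ← huv, add_neg_cancel_right]
  have hzero : -u' + u = 0 :=
    h.eq_zero_of_mem_of_mem (P.add_mem (P.neg_mem hu') hu)
      (hmid ▸ Q.add_mem hv' (Q.neg_mem hv))
  refine ⟨(neg_add_eq_zero.mp hzero).symm, ?_⟩
  rw [hzero, eq_comm, add_neg_eq_zero] at hmid
  exact hmid.symm

theorem exists_add_eq [Finite G] (h : IsSylowHallPair p P Q) (a : G) :
    ∃ u ∈ P, ∃ v ∈ Q, u + v = a := by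
  set n := addOrderOf a
  set e := n.factorization p
  set m := n / p ^ e
  have hnm : p ^ e * m = n := Nat.ordProj_mul_ordCompl_eq_self n p
  have hpm : ¬ p ∣ m := Nat.not_dvd_ordCompl h.prime (addOrderOf_pos a).ne'
  obtain ⟨x, y, hxy⟩ := Nat.isCoprime_iff_coprime.mpr (h.prime.coprime_pow_of_not_dvd hpm).symm
  have hsmul : ∀ (k : ℕ) (z : ℤ), (n : ℤ) ∣ k * z → k • z • a = 0 := fun k z hkz => by
    rw [← natCast_zsmul, ← mul_zsmul]
    exact addOrderOf_dvd_iff_zsmul_eq_zero.mp hkz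
  refine ⟨(y * m) • a, (h.mem_left _).mpr ⟨e, hsmul _ _ ⟨y, ?_⟩⟩,
    (x * (p ^ e : ℕ)) • a, (h.mem_right _).mpr fun hdvd => hpm (hdvd.trans ?_), ?_⟩
  · rw [← hnm]; push_cast; ring
  · exact addOrderOf_dvd_of_nsmul_eq_zero (hsmul m _ ⟨x, by rw [← hnm]; push_cast; ring⟩)
  · rw [← add_zsmul, show y * m + x * (p ^ e : ℕ) = 1 by linarith, one_zsmul]

theorem card_left_mul_card_right [Finite G] (h : IsSylowHallPair p P Q) :
    Nat.card P * Nat.card Q = Nat.card G := by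
  rw [← Nat.card_prod]
  refine Nat.card_congr (Equiv.ofBijective (fun w => (w.1 : G) + w.2) ⟨?_, ?_⟩)
  · rintro ⟨⟨u, hu⟩, ⟨v, hv⟩⟩ ⟨⟨u', hu'⟩, ⟨v', hv'⟩⟩ huv
    obtain ⟨rfl, rfl⟩ := h.add_inj hu hv hu' hv' huv
    rfl
  · intro a
    obtain ⟨u, hu, v, hv, rfl⟩ := h.exists_add_eq a
    exact ⟨(⟨u, hu⟩, ⟨v, hv⟩), rfl⟩

theorem not_dvd_card_right [Finite G] (h : IsSylowHallPair p P Q) : ¬ p ∣ Nat.card Q := by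
  have := Fact.mk h.prime
  intro hdvd
  obtain ⟨v, hv⟩ := exists_prime_addOrderOf_dvd_card' p hdvd
  exact (h.mem_right v).mp v.2 (by rw [AddSubgroup.addOrderOf_coe, hv])

theorem isPGroup_multiplicative_left (h : IsSylowHallPair p P Q) :
    IsPGroup p (Multiplicative P) := fun g => by
  obtain ⟨k, hk⟩ := (h.mem_left _).mp (Multiplicative.toAdd g).2
  exact ⟨k, Multiplicative.toAdd.injective (Subtype.ext hk)⟩

theorem card_left [Finite G] (h : IsSylowHallPair p P Q) :
    Nat.card P = p ^ (Nat.card G).factorization p := by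
  have := Fact.mk h.prime
  obtain ⟨e, he⟩ := IsPGroup.iff_card.mp h.isPGroup_multiplicative_left
  replace he : Nat.card P = p ^ e := he
  rw [← h.card_left_mul_card_right, he, Nat.factorization_mul (pow_ne_zero _ h.prime.ne_zero)
    Nat.card_pos.ne', Finsupp.add_apply, h.prime.factorization_pow, Finsupp.single_eq_same,
    Nat.factorization_eq_zero_of_not_dvd h.not_dvd_card_right, add_zero]

end IsSylowHallPair

namespace SkewBrace

variable {A : Type*} [SkewBrace A]

theorem mul_zero_eq_self (a : A) : a * 0 = a := by
  have h := SkewBrace.compat a 0 0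
  rw [add_zero] at h
  exact sub_eq_zero.mp (right_eq_add.mp h)

theorem one_eq_zero : (1 : A) = 0 := by
  simpa using (mul_zero_eq_self (1 : A)).symm

theorem mul_eq_add_lam (a b : A) : a * b = a + lam a b := by
  simp [lam]

theorem lam_add (a b c : A) : lam a (b + c) = lam a b + lam a c := by
  simp [lam, SkewBrace.compat a b c, sub_eq_add_neg, add_assoc]

theorem mul_neg_eq (a b : A) : a * -b = a - a * b + a := by
  have h := SkewBrace.compat a b (-b)
  rw [add_neg_cancel, mul_zero_eq_self] at h
  rw [eq_neg_add_of_add_eq h.symm, neg_sub]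

theorem lam_mul (a b c : A) : lam (a * b) c = lam a (lam b c) := by
  simp [lam, SkewBrace.compat, mul_neg_eq, mul_assoc, sub_eq_add_neg, add_assoc]

theorem lam_one (b : A) : lam 1 b = b := by
  simp [lam, one_eq_zero]

theorem lam_inv_lam (a b : A) : lam a⁻¹ (lam a b) = b := by
  rw [← lam_mul, inv_mul_cancel, lam_one]

theorem lam_lam_inv (a b : A) : lam a (lam a⁻¹ b) = b := by
  rw [← lam_mul, mul_inv_cancel, lam_one]

theorem lam_inv_self (a : A) : lam a a⁻¹ = -a := by
  refine (neg_eq_of_add_eq_zero_right ?_).symm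
  rw [← mul_eq_add_lam, mul_inv_cancel, one_eq_zero]

def lamAddEquiv (a : A) : A ≃+ A where
  toFun := lam a
  invFun := lam a⁻¹
  left_inv := lam_inv_lam a
  right_inv := lam_lam_inv a
  map_add' := lam_add a

@[simp]
theorem lamAddEquiv_apply (a b : A) : lamAddEquiv a b = lam a b := rfl

theorem lam_pow_of_lam_starB (x b : A) (hfix : lam x (starB x b) = starB x b) (j : ℕ) :
    lam (x ^ j) b = j • starB x b + b := by
  induction j with
  | zero => simp [lam_one]
  | succ j ih =>
    rw [pow_succ', lam_mul, ih, lam_add, ← lamAddEquiv_apply, map_nsmul, lamAddEquiv_apply,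
      hfix, succ_nsmul, add_assoc, starB, sub_add_cancel]

theorem orderOf_nsmul_starB_eq_zero (x b : A) (hfix : lam x (starB x b) = starB x b) :
    orderOf x • starB x b = 0 := by
  simpa [pow_orderOf_eq_one, lam_one] using (lam_pow_of_lam_starB x b hfix (orderOf x)).symm

theorem starB_eq_zero_iff {x y : A} : starB x y = 0 ↔ lam x y = y := sub_eq_zero

theorem starSet_eq_bot_iff {X Y : Set A} :
    starSet X Y = ⊥ ↔ ∀ x ∈ X, ∀ y ∈ Y, lam x y = y := by
  simp only [starSet, AddSubgroup.closure_eq_bot_iff, Set.subset_singleton_iff, Set.mem_ofPred_eq,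
    forall_exists_index, and_imp, ← starB_eq_zero_iff]
  exact ⟨fun h x hx y hy => h _ x hx y hy rfl, fun h _ x hx y hy hz => hz ▸ h x hx y hy⟩

def IsLeftIdeal (I : AddSubgroup A) : Prop := ∀ a, ∀ b ∈ I, lam a b ∈ I

theorem Lseq_succ_le_iff {S T : AddSubgroup A} {k : ℕ} :
    Lseq S (k + 1) ≤ T ↔ ∀ x, ∀ y ∈ Lseq S k, starB x y ∈ T := by
  simp only [Lseq, starSet, AddSubgroup.closure_le, Set.subset_def, Set.mem_ofPred_eq,
    Set.mem_univ, true_and, SetLike.mem_coe, forall_exists_index, and_imp]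
  exact ⟨fun h x y hy => h _ x y hy rfl, fun h _ x y hy hz => hz ▸ h x y hy⟩

theorem starB_mem_Lseq_succ {S : AddSubgroup A} {k : ℕ} (x : A) {y : A} (hy : y ∈ Lseq S k) :
    starB x y ∈ Lseq S (k + 1) :=
  AddSubgroup.subset_closure ⟨x, Set.mem_univ x, y, hy, rfl⟩

theorem Lseq_succ_eq_bot {S : AddSubgroup A} {n : ℕ} (h : Lseq S n = ⊥) :
    Lseq S (n + 1) = ⊥ := by
  refine starSet_eq_bot_iff.mpr fun x _ y hy => ?_
  rw [h, SetLike.mem_coe, AddSubgroup.mem_bot] at hy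
  rw [hy, ← starB_eq_zero_iff, starB, lam, mul_zero_eq_self, neg_add_cancel, sub_zero]

namespace IsLeftIdeal

variable {I : AddSubgroup A}

theorem Lseq_le (hI : IsLeftIdeal I) (k : ℕ) : Lseq I k ≤ I := by
  induction k with
  | zero => exact le_rfl
  | succ k ih => exact Lseq_succ_le_iff.mpr fun x y hy => I.sub_mem (hI x y (ih hy)) (ih hy)

def toSubgroup (hI : IsLeftIdeal I) : Subgroup A where
  carrier := I
  one_mem' := one_eq_zero (A := A) ▸ I.zero_mem
  mul_mem' {a b} ha hb := (mul_eq_add_lam a b).symm ▸ I.add_mem ha (hI a b hb)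
  inv_mem' {a} ha := lam_inv_lam a a⁻¹ ▸ hI a⁻¹ _ ((lam_inv_self a).symm ▸ I.neg_mem ha)

theorem card_toSubgroup (hI : IsLeftIdeal I) : Nat.card hI.toSubgroup = Nat.card I := rfl

def lamMulAut (hI : IsLeftIdeal I) : A →* MulAut (Multiplicative I) where
  toFun a := AddEquiv.toMultiplicative
    { toFun := fun b => ⟨lam a b, hI a b b.2⟩
      invFun := fun b => ⟨lam a⁻¹ b, hI a⁻¹ b b.2⟩
      left_inv := fun b => Subtype.ext (lam_inv_lam a b)
      right_inv := fun b => Subtype.ext (lam_lam_inv a b)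
      map_add' := fun b c => Subtype.ext (lam_add a b c) }
  map_one' := by ext b; exact lam_one _
  map_mul' a b := by ext c; exact lam_mul a b _

abbrev lamSemidirectProduct (hI : IsLeftIdeal I) (H : Subgroup A) : Type _ :=
  Multiplicative I ⋊[hI.lamMulAut.comp H.subtype] H

/-- `x * b` is the commutator `⁅g, b⁆` in `I ⋊ H` for any `g ∈ H` with `λ_g = λ_x` on `I`. -/
theorem Lseq_le_map_lowerCentralSeries (hI : IsLeftIdeal I) {H : Subgroup A}
    (hH : ∀ x : A, ∃ g ∈ H, ∀ b ∈ I, lam x b = lam g b) (k : ℕ) :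
    Lseq I k ≤ (((⊤ : Subgroup (hI.lamSemidirectProduct H)).lowerCentralSeries k).comap
      SemidirectProduct.inl).toAddSubgroup'.map I.subtype := by
  induction k with
  | zero => exact fun a ha => ⟨⟨a, ha⟩, trivial, rfl⟩
  | succ k ih =>
    refine Lseq_succ_le_iff.mpr fun x y hy => ?_
    obtain ⟨b, hb, rfl⟩ := ih hy
    obtain ⟨g, hg, hxg⟩ := hH x
    refine ⟨⟨starB x b, I.sub_mem (hI x b b.2) b.2⟩, ?_, rfl⟩
    rw [SetLike.mem_coe, Subgroup.mem_toAddSubgroup', Subgroup.mem_comap]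
    convert SemidirectProduct.inl_aut_mul_inv_mem_lowerCentralSeries hb ⟨g, hg⟩ using 2
    refine Subtype.ext ?_
    change lam x b - b = lam g b + -(b : A)
    rw [hxg b b.2, sub_eq_add_neg]

end IsLeftIdeal

end SkewBrace

namespace IsSylowHallPair

open SkewBrace

variable {A : Type*} [SkewBrace A] {p : ℕ} {P Q : AddSubgroup A}

theorem isLeftIdeal_left (h : IsSylowHallPair p P Q) : IsLeftIdeal P :=
  fun a _ hb => h.map_mem_left (lamAddEquiv a) hb

theorem isLeftIdeal_right (h : IsSylowHallPair p P Q) : IsLeftIdeal Q :=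
  fun a _ hb => h.map_mem_right (lamAddEquiv a) hb

theorem exists_mul_eq [Finite A] (h : IsSylowHallPair p P Q) (x : A) :
    ∃ u ∈ P, ∃ w ∈ Q, u * w = x := by
  obtain ⟨u, hu, v, hv, rfl⟩ := h.exists_add_eq x
  exact ⟨u, hu, lam u⁻¹ v, h.isLeftIdeal_right _ _ hv, by rw [mul_eq_add_lam, lam_lam_inv]⟩

theorem not_dvd_orderOf [Finite A] (h : IsSylowHallPair p P Q) {x : A} (hx : x ∈ Q) :
    ¬ p ∣ orderOf x := fun hdvd =>
  h.not_dvd_card_right <| hdvd.trans <|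
    h.isLeftIdeal_right.card_toSubgroup ▸ Subgroup.orderOf_dvd_natCard _ hx

theorem lam_eq_self_of_Lseq_eq_bot [Finite A] (h : IsSylowHallPair p P Q) {n : ℕ}
    (hn : Lseq P n = ⊥) {x : A} (hx : x ∈ Q) {b : A} (hb : b ∈ P) : lam x b = b := by
  suffices ∀ j k, k + j = n → ∀ y ∈ Lseq P k, starB x y = 0 from
    starB_eq_zero_iff.mp (this n 0 (zero_add n) b hb)
  intro j
  induction j with
  | zero =>
    rintro k rfl y hy
    rw [add_zero] at hn
    rw [hn, AddSubgroup.mem_bot] at hy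
    rw [hy, starB_eq_zero_iff, lam, mul_zero_eq_self, neg_add_cancel]
  | succ j ih =>
    intro k hk y hy
    have hc := starB_mem_Lseq_succ x hy
    have hfix := starB_eq_zero_iff.mp (ih (k + 1) (by omega) _ hc)
    exact h.eq_zero_of_nsmul_eq_zero (h.isLeftIdeal_left.Lseq_le _ hc) (h.not_dvd_orderOf hx)
      (orderOf_nsmul_starB_eq_zero x y hfix)

theorem conj_eq_lam (h : IsSylowHallPair p P Q) (hfix : ∀ x ∈ Q, ∀ b ∈ P, lam x b = b)
    {u y : A} (hu : u ∈ P) (hy : y ∈ Q) : u * y * u⁻¹ = lam u y := by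
  rw [mul_inv_eq_iff_eq_mul, mul_eq_add_lam, mul_eq_add_lam,
    hfix _ (h.isLeftIdeal_right u y hy) u hu, h.add_comm hu (h.isLeftIdeal_right u y hy)]

theorem normal_of_lam_eq_self [Finite A] (h : IsSylowHallPair p P Q)
    (hfix : ∀ x ∈ Q, ∀ b ∈ P, lam x b = b) : h.isLeftIdeal_right.toSubgroup.Normal := by
  refine ⟨fun x hx g => ?_⟩
  obtain ⟨u, hu, w, hw, rfl⟩ := h.exists_mul_eq g
  have hwx : w * x * w⁻¹ ∈ h.isLeftIdeal_right.toSubgroup := mul_mem (mul_mem hw hx) (inv_mem hw)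
  have : u * w * x * (u * w)⁻¹ = u * (w * x * w⁻¹) * u⁻¹ := by group
  rw [this, h.conj_eq_lam hfix hu hwx]
  exact h.isLeftIdeal_right u _ hwx

theorem lam_eq_self_of_normal (h : IsSylowHallPair p P Q)
    (hN : h.isLeftIdeal_right.toSubgroup.Normal) {x : A} (hx : x ∈ Q) {b : A} (hb : b ∈ P) :
    lam x b = b := by
  have hx' : b⁻¹ * x * b ∈ Q := by
    have := hN.conj_mem x hx b⁻¹
    rwa [inv_inv] at this
  -- compare the `P`-components of `b ∘ x' = x ∘ b`
  have hcomp : b + lam b (b⁻¹ * x * b) = lam x b + x := by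
    rw [← mul_eq_add_lam, h.add_comm (h.isLeftIdeal_left x b hb) hx, ← mul_eq_add_lam]
    group
  exact (h.add_inj hb (h.isLeftIdeal_right b _ hx') (h.isLeftIdeal_left x b hb) hx hcomp).1.symm

theorem lam_eq_self_iff_normal [Finite A] (h : IsSylowHallPair p P Q) :
    (∀ x ∈ Q, ∀ b ∈ P, lam x b = b) ↔ h.isLeftIdeal_right.toSubgroup.Normal :=
  ⟨h.normal_of_lam_eq_self, fun hN _ hx _ hb => h.lam_eq_self_of_normal hN hx hb⟩

theorem exists_normal_iff [Finite A] (h : IsSylowHallPair p P Q) :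
    (∃ H : Subgroup A, H.Normal ∧ Nat.card H * p ^ (Nat.card A).factorization p = Nat.card A) ↔
      h.isLeftIdeal_right.toSubgroup.Normal := by
  set e := (Nat.card A).factorization p
  have hQ : Nat.card h.isLeftIdeal_right.toSubgroup * p ^ e = Nat.card A := by
    rw [IsLeftIdeal.card_toSubgroup, ← h.card_left, mul_comm, h.card_left_mul_card_right]
  refine ⟨fun ⟨H, hN, hH⟩ => ?_, fun hN => ⟨_, hN, hQ⟩⟩
  have hindex : H.index = p ^ e :=
    Nat.eq_of_mul_eq_mul_left Nat.card_pos (H.card_mul_index.trans hH.symm)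
  have hle : h.isLeftIdeal_right.toSubgroup ≤ H :=
    Subgroup.le_of_normal_of_coprime_index
      (hindex ▸ h.prime.coprime_pow_of_not_dvd h.not_dvd_card_right)
  have hcard : Nat.card H = Nat.card h.isLeftIdeal_right.toSubgroup :=
    Nat.eq_of_mul_eq_mul_right (pow_pos h.prime.pos e) (hH.trans hQ.symm)
  exact (Subgroup.eq_of_le_of_card_ge hle hcard.le) ▸ hN

theorem exists_Lseq_eq_bot [Finite A] (h : IsSylowHallPair p P Q)
    (hfix : ∀ x ∈ Q, ∀ b ∈ P, lam x b = b) : ∃ n, Lseq P n = ⊥ := by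
  have := Fact.mk h.prime
  have hP := h.isLeftIdeal_left
  have hrep (x : A) : ∃ u ∈ hP.toSubgroup, ∀ b ∈ P, lam x b = lam u b := by
    obtain ⟨u, hu, w, hw, rfl⟩ := h.exists_mul_eq x
    exact ⟨u, hu, fun b hb => by rw [lam_mul, hfix w hw b hb]⟩
  have hΓ : IsPGroup p (hP.lamSemidirectProduct hP.toSubgroup) :=
    h.isPGroup_multiplicative_left.semidirectProduct
      (IsPGroup.of_card (hP.card_toSubgroup.trans h.card_left))
  have : Finite (hP.lamSemidirectProduct hP.toSubgroup) :=
    Finite.of_equiv _ SemidirectProduct.equivProd.symm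
  obtain ⟨m, hm⟩ := Subgroup.nilpotent_iff_lowerCentralSeries.mp hΓ.isNilpotent
  have hle := hP.Lseq_le_map_lowerCentralSeries hrep m
  rw [hm, MonoidHom.comap_bot, (MonoidHom.ker_eq_bot_iff _).mpr SemidirectProduct.inl_injective,
    map_bot, AddSubgroup.map_bot, le_bot_iff] at hle
  exact ⟨m, hle⟩

end IsSylowHallPair

theorem left_p_nilpotent_tfae_general {A : Type*} [SkewBrace A] [Finite A]
    (p : ℕ) (hp : p.Prime) (Sp Sp' : AddSubgroup A)
    (hSp : (Sp : Set A) = {a : A | ∃ k : ℕ, p ^ k • a = 0})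
    (hSp' : (Sp' : Set A) = {a : A | ¬ p ∣ addOrderOf a}) :
    ((∃ n : ℕ, 0 < n ∧ Lseq Sp n = ⊥) ↔ starSet (↑Sp' : Set A) ↑Sp = ⊥) ∧
    (starSet (↑Sp' : Set A) ↑Sp = ⊥ ↔
      ∃ H : Subgroup A, H.Normal ∧
        Nat.card H * p ^ (Nat.card A).factorization p = Nat.card A) := by
  have h : IsSylowHallPair p Sp Sp' :=
    ⟨hp, fun a => by rw [← SetLike.mem_coe, hSp]; rfl,
      fun a => by rw [← SetLike.mem_coe, hSp']; rfl⟩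
  rw [SkewBrace.starSet_eq_bot_iff, h.exists_normal_iff]
  refine ⟨⟨fun ⟨n, _, hn⟩ x hx b hb => h.lam_eq_self_of_Lseq_eq_bot hn hx hb, fun hfix => ?_⟩,
    h.lam_eq_self_iff_normal⟩
  obtain ⟨n, hn⟩ := h.exists_Lseq_eq_bot hfix
  exact ⟨n + 1, n.succ_pos, SkewBrace.Lseq_succ_eq_bot hn⟩

/-- Let `A` be a finite skew left brace of nilpotent type, `p` a prime dividing `|A|`,
`A_p` the Sylow `p`-subgroup of `(A,+)` and `A_{p'}` the Hall `p'`-subgroup of `(A,+)`.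
The following are equivalent: (1) `L_n(A, A_p) = 0` for some `n ≥ 1`;
(2) `A_{p'} * A_p = 0`; (3) `(A,∘)` is `p`-nilpotent, i.e. has a normal Hall
`p'`-subgroup. -/
theorem left_p_nilpotent_tfae {A : Type*} [SkewBrace A] [Finite A]
    (hnil : Group.IsNilpotent (Multiplicative A)) (p : ℕ) (hp : p.Prime)
    (hdvd : p ∣ Nat.card A) (Sp Sp' : AddSubgroup A)
    (hSp : (Sp : Set A) = {a : A | ∃ k : ℕ, p ^ k • a = 0})
    (hSp' : (Sp' : Set A) = {a : A | ¬ p ∣ addOrderOf a}) :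
    ((∃ n : ℕ, 0 < n ∧ Lseq Sp n = ⊥) ↔ starSet (↑Sp' : Set A) ↑Sp = ⊥) ∧
    (starSet (↑Sp' : Set A) ↑Sp = ⊥ ↔
      ∃ H : Subgroup A, H.Normal ∧
        Nat.card H * p ^ (Nat.card A).factorization p = Nat.card A) :=
  left_p_nilpotent_tfae_general p hp Sp Sp' hSp hSp'
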